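/- Let A = ℂ⟨x,y⟩ and f ∈ A. If (∂f/∂x)'' (∂f/∂x)' x = x (∂f/∂x)'' (∂f/∂x)' in A (i.e., the element (∂f/∂x)''(∂f/∂x)' commutes with x), then modulo commutators f lies in ℂ[x] + ℂ[y] + [A,A]. -/

import Mathlib

/-!
Put `c = (∂f/∂x)''(∂f/∂x)'`. For a simple tensor `a ⊗ b`, the elements `x (b a)` and `a x b`
differ by a commutator, and `f ↦ Σ (∂f/∂x)' x (∂f/∂x)''` satisfies the Leibniz rule with
`x ↦ x`, `y ↦ 0`; so it is the operator `E` multiplying each word by its number of `x`'s, and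
`x c ≡ E f` modulo `[A,A]`. Comparing coefficients of words in `c x = x c` shows that the
centralizer of `x` is `ℂ[x]`, hence `E f ∈ ℂ[x] + [A,A]`. Because the `x`-degree of a word is
invariant under cyclic rotation, the inverse of `E` on words of positive `x`-degree preserves
both `ℂ[x]` and `[A,A]`, and the words of `x`-degree zero span `ℂ[y]`.
-/

open TensorProduct

noncomputable section

abbrev A2 := FreeAlgebra ℂ (Fin 2)

def Xg : A2 := FreeAlgebra.ι ℂ 0
def Yg : A2 := FreeAlgebra.ι ℂ 1

/-- `u ⊗ v ↦ v * u`, i.e. Sweedler `(∂f/∂x)'' (∂f/∂x)'`. -/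
def mulRev : A2 ⊗[ℂ] A2 →ₗ[ℂ] A2 :=
  (LinearMap.mul' ℂ A2) ∘ₗ (TensorProduct.comm ℂ A2 A2).toLinearMap

def commSpan : Submodule ℂ A2 :=
  Submodule.span ℂ {z : A2 | ∃ a b : A2, z = a * b - b * a}

section Commutators

variable (R A : Type*) [CommRing R] [Ring A] [Algebra R A]

def commutatorSpan : Submodule R A :=
  Submodule.span R {z : A | ∃ a b : A, z = a * b - b * a}

variable {R A}

theorem mul_sub_mul_mem_commutatorSpan (a b : A) : a * b - b * a ∈ commutatorSpan R A :=
  Submodule.subset_span ⟨a, b, rfl⟩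

theorem AlgHom.map_commutatorSpan_le {B : Type*} [Ring B] [Algebra R B] (φ : A →ₐ[R] B) :
    (commutatorSpan R A).map φ.toLinearMap ≤ commutatorSpan R B := by
  rw [commutatorSpan, Submodule.map_span_le]
  rintro _ ⟨a, b, rfl⟩
  simpa using mul_sub_mul_mem_commutatorSpan (φ a) (φ b)

theorem AlgEquiv.map_commutatorSpan {B : Type*} [Ring B] [Algebra R B] (e : A ≃ₐ[R] B) :
    (commutatorSpan R A).map e.toLinearMap = commutatorSpan R B := by
  refine le_antisymm (AlgHom.map_commutatorSpan_le e.toAlgHom) ?_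
  rw [commutatorSpan, Submodule.span_le]
  rintro _ ⟨a, b, rfl⟩
  exact ⟨_, mul_sub_mul_mem_commutatorSpan (e.symm a) (e.symm b), by simp⟩

end Commutators

section InsertMul

variable {R A : Type*} [CommRing R] [Ring A] [Algebra R A]

def insertMul (g : A) : A ⊗[R] A →ₗ[R] A :=
  LinearMap.mul' R A ∘ₗ TensorProduct.map (LinearMap.mulRight R g) LinearMap.id

@[simp] theorem insertMul_tmul (g a b : A) : insertMul g (a ⊗ₜ[R] b) = a * g * b := by
  simp [insertMul]

theorem insertMul_tmul_one_mul (g u : A) (s : A ⊗[R] A) :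
    insertMul g ((u ⊗ₜ[R] 1) * s) = u * insertMul g s := by
  induction s with
  | zero => simp
  | tmul a b => simp [mul_assoc]
  | add s t hs ht => simp [mul_add, hs, ht]

theorem insertMul_mul_one_tmul (g v : A) (s : A ⊗[R] A) :
    insertMul g (s * (1 ⊗ₜ[R] v)) = insertMul g s * v := by
  induction s with
  | zero => simp
  | tmul a b => simp [mul_assoc]
  | add s t hs ht => simp [add_mul, hs, ht]

theorem insertMul_leibniz {D : A →ₗ[R] A ⊗[R] A}
    (hD : ∀ u v, D (u * v) = (u ⊗ₜ[R] 1) * D v + D u * (1 ⊗ₜ[R] v)) (g u v : A) :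
    insertMul g (D (u * v)) = u * insertMul g (D v) + insertMul g (D u) * v := by
  rw [hD, map_add, insertMul_tmul_one_mul, insertMul_mul_one_tmul]

theorem mul_mul'_comm_sub_insertMul_mem (g : A) (s : A ⊗[R] A) :
    g * LinearMap.mul' R A (TensorProduct.comm R A A s) - insertMul g s ∈
      commutatorSpan R A := by
  induction s with
  | zero => simp
  | tmul a b => simpa [mul_assoc] using mul_sub_mul_mem_commutatorSpan (R := R) (g * b) a
  | add s t hs ht => simpa [mul_add, add_sub_add_comm] using add_mem hs ht

end InsertMul

theorem map_one_eq_zero_of_leibniz {R A : Type*} [CommRing R] [Ring A] [Algebra R A]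
    {E : A →ₗ[R] A} (hE : ∀ u v, E (u * v) = u * E v + E u * v) : E 1 = 0 := by
  simpa using hE 1 1

theorem FreeAlgebra.linearMap_ext_of_leibniz {R X : Type*} [CommRing R]
    {E E' : FreeAlgebra R X →ₗ[R] FreeAlgebra R X}
    (hE : ∀ u v, E (u * v) = u * E v + E u * v) (hE' : ∀ u v, E' (u * v) = u * E' v + E' u * v)
    (h : ∀ x, E (ι R x) = E' (ι R x)) : E = E' := by
  ext f
  induction f using FreeAlgebra.induction with
  | grade0 r =>
    rw [Algebra.algebraMap_eq_smul_one, map_smul, map_smul, map_one_eq_zero_of_leibniz hE,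
      map_one_eq_zero_of_leibniz hE']
  | grade1 x => exact h x
  | mul u v hu hv => rw [hE, hE', hu, hv]
  | add u v hu hv => rw [map_add, map_add, hu, hv]

theorem FreeMonoid.mem_closure_image_of_iff {α : Type*} {S : Set α} {m : FreeMonoid α} :
    m ∈ Submonoid.closure (FreeMonoid.of '' S) ↔ ∀ x ∈ m, x ∈ S := by
  constructor
  · intro hm
    induction hm using Submonoid.closure_induction with
    | mem _ h => obtain ⟨y, hy, rfl⟩ := h; simpa [FreeMonoid.mem_of]
    | one => simp [FreeMonoid.notMem_one]
    | mul m n _ _ hm hn => simpa [FreeMonoid.mem_mul, or_imp, forall_and] using ⟨hm, hn⟩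
  · induction m using FreeMonoid.inductionOn' with
    | one => exact fun _ => one_mem _
    | of_mul x m ih =>
      intro h
      simp only [FreeMonoid.mem_mul, FreeMonoid.mem_of, or_imp, forall_and, forall_eq] at h
      exact mul_mem (Submonoid.subset_closure ⟨x, h.1, rfl⟩) (ih h.2)

namespace MonoidAlgebra

theorem toSubmodule_adjoin_image_of {K M : Type*} [CommSemiring K] [Monoid M] (S : Set M) :
    Subalgebra.toSubmodule (Algebra.adjoin K (of K M '' S)) =
      supported K K (Submonoid.closure S) := by
  rw [Algebra.adjoin_eq_span, ← MonoidHom.map_mclosure, Submonoid.coe_map,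
    supported_eq_span_single]
  rfl

/- Comparing the coefficients of `a m a` and of `a m b` in `c * a = a * c` shows that `c` takes
the same value on `m a` and on `a m`, and vanishes on words ending in a letter `b ≠ a`; moving
final `a`'s to the front reduces every word containing such a `b` to one of the latter. -/
theorem mem_supported_closure_of_commute {K α : Type*} [CommSemiring K] {a : α}
    {c : MonoidAlgebra K (FreeMonoid α)} (hc : Commute c (of K _ (FreeMonoid.of a))) :
    c ∈ supported K K (Submonoid.closure (FreeMonoid.of '' {a})) := by
  have hcoeff (m : FreeMonoid α) :
      (c * single (FreeMonoid.of a) 1).coeff m = (single (FreeMonoid.of a) 1 * c).coeff m := by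
    rw [← of_apply, hc.eq]
  have rotate (m : FreeMonoid α) :
      c.coeff (m * FreeMonoid.of a) = c.coeff (FreeMonoid.of a * m) := by
    have h := hcoeff (FreeMonoid.of a * m * FreeMonoid.of a)
    rwa [coeff_mul_single_mul, mul_one, mul_assoc, coeff_single_mul_mul, one_mul, eq_comm] at h
  have vanish (m : FreeMonoid α) (b : α) (hb : b ≠ a) : c.coeff (m * FreeMonoid.of b) = 0 := by
    have h := hcoeff (FreeMonoid.of a * (m * FreeMonoid.of b))
    rw [coeff_single_mul_mul, one_mul, coeff_mul_single_of_forall_mul_ne] at h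
    · exact h.symm
    intro d hd
    rw [← mul_assoc] at hd
    exact hb (by simpa [eq_comm] using (List.append_inj' (congrArg FreeMonoid.toList hd) rfl).2)
  have vanish_of_mem (b : α) (hb : b ≠ a) (v : List α) :
      ∀ u, c.coeff (u * FreeMonoid.of b * FreeMonoid.ofList v) = 0 := by
    induction v using List.reverseRecOn with
    | nil => intro u; simpa using vanish u b hb
    | append_singleton v x ih =>
      intro u
      rw [FreeMonoid.ofList_append, FreeMonoid.ofList_singleton, ← mul_assoc]
      by_cases hx : x = a
      · subst hx
        rw [rotate]
        simpa [mul_assoc] using ih (FreeMonoid.of x * u)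
      · exact vanish _ x hx
  refine mem_supported'.2 fun m hm => ?_
  rw [SetLike.mem_coe, FreeMonoid.mem_closure_image_of_iff] at hm
  obtain ⟨b, hbm, hb⟩ := not_forall₂.1 hm
  obtain ⟨s, t, hst⟩ := List.append_of_mem hbm
  have : m = FreeMonoid.ofList (s ++ [b] ++ t) := hst.trans (List.append_cons s b t)
  rw [this, FreeMonoid.ofList_append, FreeMonoid.ofList_append, FreeMonoid.ofList_singleton]
  exact vanish_of_mem b (by simpa using hb) t _

section CommRing

variable {K M : Type*} [CommRing K] [Monoid M]

def scaleCoeff (φ : M → K) : MonoidAlgebra K M →ₗ[K] MonoidAlgebra K M :=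
  (MonoidAlgebra.basis M K).constr K fun m => φ m • single m 1

variable {φ : M → K}

@[simp] theorem scaleCoeff_single (m : M) (r : K) :
    scaleCoeff φ (single m r) = single m (φ m * r) := by
  rw [show single m r = r • basis M K m by simp [smul_single], map_smul, scaleCoeff,
    Module.Basis.constr_basis]
  simp [smul_single, mul_comm]

@[simp] theorem coeff_scaleCoeff (f : MonoidAlgebra K M) (m : M) :
    (scaleCoeff φ f).coeff m = φ m * f.coeff m := by
  classical
  induction f using MonoidAlgebra.induction_linear with
  | zero => simp
  | add f g hf hg => simp [hf, hg, mul_add]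
  | single n r => by_cases h : n = m <;> simp [h]

theorem scaleCoeff_mem_supported {s : Set M} {f : MonoidAlgebra K M}
    (hf : f ∈ supported K K s) : scaleCoeff φ f ∈ supported K K s :=
  mem_supported'.2 fun m hm => by simp [mem_supported'.1 hf m hm]

theorem scaleCoeff_leibniz (hφ : ∀ m n, φ (m * n) = φ m + φ n) (p q : MonoidAlgebra K M) :
    scaleCoeff φ (p * q) = p * scaleCoeff φ q + scaleCoeff φ p * q := by
  let μ := LinearMap.mul K (MonoidAlgebra K M)
  have := LinearMap.ext_basis (basis M K) (basis M K) (B := μ.compr₂ (scaleCoeff φ))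
    (B' := μ.compl₂ (scaleCoeff φ) + μ.comp (scaleCoeff φ))
    fun m n => by simp [μ, hφ, add_comm]
  exact congr($this p q)

theorem scaleCoeff_mem_commutatorSpan (hφ : ∀ m n, φ (m * n) = φ (n * m))
    {f : MonoidAlgebra K M} (hf : f ∈ commutatorSpan K (MonoidAlgebra K M)) :
    scaleCoeff φ f ∈ commutatorSpan K (MonoidAlgebra K M) := by
  let C := commutatorSpan K (MonoidAlgebra K M)
  let μ := LinearMap.mul K (MonoidAlgebra K M)
  have hmod : (μ - μ.flip).compr₂ (C.mkQ ∘ₗ scaleCoeff φ) = 0 := by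
    refine LinearMap.ext_basis (basis M K) (basis M K) fun m n => ?_
    simpa [μ, sub_eq_zero, Submodule.Quotient.eq, hφ n m, smul_sub, smul_single] using
      C.smul_mem (φ (m * n)) (mul_sub_mul_mem_commutatorSpan (single m (1 : K)) (single n 1))
  induction hf using Submodule.span_induction with
  | mem _ h =>
    obtain ⟨p, q, rfl⟩ := h
    simpa [μ, sub_eq_zero, Submodule.Quotient.eq] using congr($hmod p q)
  | zero => simp
  | add f g _ _ hf hg => simpa using add_mem hf hg
  | smul r f _ hf => simpa using Submodule.smul_mem _ r hf

end CommRing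

theorem sub_scaleCoeff_inv_scaleCoeff_mem_supported {K M : Type*} [Field K] [Monoid M]
    (φ : M → K) (f : MonoidAlgebra K M) :
    f - scaleCoeff φ⁻¹ (scaleCoeff φ f) ∈ supported K K {m | φ m = 0} :=
  mem_supported'.2 fun m hm => by simp [← mul_assoc, inv_mul_cancel₀ hm]

theorem mem_sup_of_scaleCoeff_count_mem {K α : Type*} [Field K] [CharZero K]
    [DecidableEq α] {a : α} {f : MonoidAlgebra K (FreeMonoid α)}
    (hf : scaleCoeff (fun m => ((FreeMonoid.toList m).count a : K)) f ∈
      supported K K (Submonoid.closure (FreeMonoid.of '' {a}) : Set (FreeMonoid α)) ⊔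
        commutatorSpan K (MonoidAlgebra K (FreeMonoid α))) :
    f ∈ supported K K (Submonoid.closure (FreeMonoid.of '' {a}) : Set (FreeMonoid α)) ⊔
      supported K K (Submonoid.closure (FreeMonoid.of '' {a}ᶜ) : Set (FreeMonoid α)) ⊔
        commutatorSpan K (MonoidAlgebra K (FreeMonoid α)) := by
  set N : FreeMonoid α → K := fun m => ((FreeMonoid.toList m).count a : K)
  set P := supported K K (Submonoid.closure (FreeMonoid.of '' {a}) : Set (FreeMonoid α))
  set Q := supported K K (Submonoid.closure (FreeMonoid.of '' {a}ᶜ) : Set (FreeMonoid α))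
  set C := commutatorSpan K (MonoidAlgebra K (FreeMonoid α))
  -- `N⁻¹` inverts `N` where `N ≠ 0` and is `0` where `N = 0`, since `0⁻¹ = 0`.
  have hR : scaleCoeff N⁻¹ (scaleCoeff N f) ∈ P ⊔ C := by
    obtain ⟨p, hp, q, hq, hpq⟩ := Submodule.mem_sup.1 hf
    rw [← hpq, map_add]
    refine Submodule.add_mem_sup (scaleCoeff_mem_supported hp)
      (scaleCoeff_mem_commutatorSpan (fun m n => ?_) hq)
    simp [N, add_comm]
  have hQ : f - scaleCoeff N⁻¹ (scaleCoeff N f) ∈ Q := by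
    refine supported_mono (fun m hm => ?_) (sub_scaleCoeff_inv_scaleCoeff_mem_supported N f)
    rw [SetLike.mem_coe, FreeMonoid.mem_closure_image_of_iff]
    rintro x hx rfl
    exact List.count_eq_zero.1 (show (FreeMonoid.toList m).count x = 0 by simpa [N] using hm) hx
  rw [← add_sub_cancel (scaleCoeff N⁻¹ (scaleCoeff N f)) f, sup_right_comm]
  exact Submodule.add_mem_sup hR hQ

end MonoidAlgebra

theorem AlgHom.map_toSubmodule_adjoin {R A B : Type*} [CommSemiring R] [Semiring A]
    [Semiring B] [Algebra R A] [Algebra R B] (φ : A →ₐ[R] B) (s : Set A) :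
    (Subalgebra.toSubmodule (Algebra.adjoin R s)).map φ.toLinearMap =
      Subalgebra.toSubmodule (Algebra.adjoin R (φ '' s)) := by
  rw [← Subalgebra.map_toSubmodule, AlgHom.map_adjoin]

namespace FreeAlgebra

section CommSemiring

variable {K α : Type*} [CommSemiring K]

@[simp] theorem equivMonoidAlgebraFreeMonoid_ι (x : α) :
    equivMonoidAlgebraFreeMonoid (ι K x) = MonoidAlgebra.of K _ (FreeMonoid.of x) := by
  simp [equivMonoidAlgebraFreeMonoid]

@[simp] theorem equivMonoidAlgebraFreeMonoid_symm_single (x : α) :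
    equivMonoidAlgebraFreeMonoid.symm (MonoidAlgebra.single (FreeMonoid.of x) (1 : K)) =
      ι K x := by
  rw [AlgEquiv.symm_apply_eq, equivMonoidAlgebraFreeMonoid_ι, MonoidAlgebra.of_apply]

theorem map_toSubmodule_adjoin_ι (S : Set α) :
    (Subalgebra.toSubmodule (Algebra.adjoin K (ι K '' S))).map
        (equivMonoidAlgebraFreeMonoid (R := K) (X := α)).toLinearMap =
      MonoidAlgebra.supported K K (Submonoid.closure (FreeMonoid.of '' S)) := by
  rw [← MonoidAlgebra.toSubmodule_adjoin_image_of, Set.image_image]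
  convert AlgHom.map_toSubmodule_adjoin (equivMonoidAlgebraFreeMonoid (R := K) (X := α)).toAlgHom
    (ι K '' S) using 3
  · rfl
  · rw [Set.image_image]
    simp

theorem mem_adjoin_ι_of_commute {a : α} {c : FreeAlgebra K α} (hc : Commute c (ι K a)) :
    c ∈ Algebra.adjoin K {ι K a} := by
  have he := hc.map (equivMonoidAlgebraFreeMonoid (R := K) (X := α))
  rw [equivMonoidAlgebraFreeMonoid_ι] at he
  have h := MonoidAlgebra.mem_supported_closure_of_commute he
  rw [← map_toSubmodule_adjoin_ι] at h
  obtain ⟨y, hy, hyc⟩ := Submodule.mem_map.1 h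
  rw [equivMonoidAlgebraFreeMonoid.injective hyc, Set.image_singleton] at hy
  exact hy

end CommSemiring

theorem mem_sup_of_leibniz {K α : Type*} [Field K] [CharZero K] [DecidableEq α]
    {a : α} {E : FreeAlgebra K α →ₗ[K] FreeAlgebra K α}
    (hE : ∀ u v, E (u * v) = u * E v + E u * v) (ha : E (ι K a) = ι K a)
    (hb : ∀ b ≠ a, E (ι K b) = 0) {f : FreeAlgebra K α}
    (hf : E f ∈ Subalgebra.toSubmodule (Algebra.adjoin K {ι K a}) ⊔
      commutatorSpan K (FreeAlgebra K α)) :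
    f ∈ Subalgebra.toSubmodule (Algebra.adjoin K {ι K a}) ⊔
      Subalgebra.toSubmodule (Algebra.adjoin K (ι K '' {a}ᶜ)) ⊔
        commutatorSpan K (FreeAlgebra K α) := by
  set e := equivMonoidAlgebraFreeMonoid (R := K) (X := α)
  set N : FreeMonoid α → K := fun m => ((FreeMonoid.toList m).count a : K)
  have hE_eq : E = e.symm.toLinearMap ∘ₗ MonoidAlgebra.scaleCoeff N ∘ₗ e.toLinearMap := by
    refine linearMap_ext_of_leibniz hE (fun u v => ?_) (fun b => ?_)
    · have hN (m n : FreeMonoid α) : N (m * n) = N m + N n := by simp [N]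
      simp [MonoidAlgebra.scaleCoeff_leibniz hN]
    · by_cases hba : b = a
      · subst hba
        simp [e, N, ha]
      · simp [e, N, hb b hba, hba]
  have h1 := Submodule.mem_map_of_mem (f := e.toLinearMap) hf
  rw [Submodule.map_sup, ← Set.image_singleton, map_toSubmodule_adjoin_ι,
    AlgEquiv.map_commutatorSpan, hE_eq] at h1
  have h2 := MonoidAlgebra.mem_sup_of_scaleCoeff_count_mem (by simpa using h1)
  rw [← map_toSubmodule_adjoin_ι, ← map_toSubmodule_adjoin_ι,
    ← AlgEquiv.map_commutatorSpan e, ← Submodule.map_sup, ← Submodule.map_sup] at h2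
  obtain ⟨y, hy, hyf⟩ := Submodule.mem_map.1 h2
  rwa [e.injective hyf, Set.image_singleton] at hy

end FreeAlgebra

/-- If `(∂f/∂x)''(∂f/∂x)'` commutes with `x`, then `f ∈ ℂ[x] + ℂ[y] + [A,A]`. -/
theorem stmt_6 (D : A2 →ₗ[ℂ] A2 ⊗[ℂ] A2)
    (hLeib : ∀ u v : A2,
      D (u * v) = (u ⊗ₜ[ℂ] (1 : A2)) * D v + D u * ((1 : A2) ⊗ₜ[ℂ] v))
    (hx : D Xg = (1 : A2) ⊗ₜ[ℂ] (1 : A2)) (hy : D Yg = 0)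
    (f : A2)
    (hcomm : mulRev (D f) * Xg = Xg * mulRev (D f)) :
    f ∈ (Subalgebra.toSubmodule (Algebra.adjoin ℂ ({Xg} : Set A2))
      ⊔ Subalgebra.toSubmodule (Algebra.adjoin ℂ ({Yg} : Set A2))
      ⊔ commSpan) := by
  set E := insertMul Xg ∘ₗ D
  have hEx : E Xg = Xg := by simp [E, hx]
  have hEy : ∀ b ≠ 0, E (FreeAlgebra.ι ℂ b) = 0 := by
    intro b hb
    obtain rfl : b = 1 := by omega
    exact (congrArg (insertMul Xg) hy).trans (map_zero _)
  have hc : mulRev (D f) ∈ Algebra.adjoin ℂ {Xg} := FreeAlgebra.mem_adjoin_ι_of_commute hcomm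
  have hEf : E f ∈ Subalgebra.toSubmodule (Algebra.adjoin ℂ {Xg}) ⊔ commSpan := by
    rw [show E f = Xg * mulRev (D f) - (Xg * mulRev (D f) - E f) by abel]
    refine sub_mem (Submodule.mem_sup_left ?_)
      (Submodule.mem_sup_right (mul_mul'_comm_sub_insertMul_mem Xg (D f)))
    exact Subalgebra.mul_mem _ (Algebra.subset_adjoin rfl) hc
  have := FreeAlgebra.mem_sup_of_leibniz (insertMul_leibniz hLeib Xg) hEx hEy hEf
  rwa [show ({0}ᶜ : Set (Fin 2)) = {1} by ext b; fin_cases b <;> simp,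
    Set.image_singleton] at this

end
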